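/- If (x₀, μ) ≠ (x₀', μ') in ℝ² and σ, t₁, t₂ > 0 with t₁ ≠ t₂, then the infinite product measures γ_{(x₀,μ)}^ℕ and γ_{(x₀',μ')}^ℕ on (ℝ²)^ℕ are mutually singular, where γ_{(x₀,μ)} is the product of N(x₀+μt₁, σ²t₁) and N(x₀+μt₂, σ²t₂). -/

import Mathlib

/-!
Under `ν^ℕ` the coordinates are i.i.d. with law `ν`, so by the strong law of large numbers the
sample mean of the first `n` observations converges almost surely to the mean of `ν`. For the
two-time law this mean is `(x₀ + μ t₁, x₀ + μ t₂)`, and since `t₁ ≠ t₂` the map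
`(x₀, μ) ↦ (x₀ + μ t₁, x₀ + μ t₂)` is injective. Hence for distinct parameters the sample mean
converges to distinct limits on two disjoint full-measure events.
-/

open MeasureTheory ProbabilityTheory Filter

/-- `Q` is the countable product `ν^ℕ` on the sequence space, characterized by its
finite-dimensional marginals. -/
def IsInfiniteProduct {α : Type*} [MeasurableSpace α] (ν : Measure α)
    (Q : Measure (ℕ → α)) : Prop :=
  ∀ n : ℕ, Measure.map (fun x (i : Fin n) => x (i : ℕ)) Q = Measure.pi fun _ : Fin n => ν

/-- The two-time Gaussian law of the Wiener process with drift with parameters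
`(x₀, μ)`: product on `ℝ²` of `N(x₀+μt₁, σ²t₁)` and `N(x₀+μt₂, σ²t₂)`. -/
noncomputable def twoTimeLaw (σ t₁ t₂ x₀ μ : ℝ) : Measure (ℝ × ℝ) :=
  (ProbabilityTheory.gaussianReal (x₀ + μ * t₁) ((σ ^ 2 * t₁).toNNReal)).prod
    (ProbabilityTheory.gaussianReal (x₀ + μ * t₂) ((σ ^ 2 * t₂).toNNReal))

open Finset
open scoped Topology

theorem IsInfiniteProduct.eq_infinitePi {α : Type*} [MeasurableSpace α] {ν : Measure α}
    [IsProbabilityMeasure ν] {Q : Measure (ℕ → α)} (hQ : IsInfiniteProduct ν Q) :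
    Q = Measure.infinitePi fun _ => ν := by
  classical
  refine Measure.eq_infinitePi _ fun s t ht => ?_
  obtain ⟨n, hsn⟩ := s.exists_nat_subset_range
  set t' : Fin n → Set α := fun i => if (i : ℕ) ∈ s then t i else Set.univ
  have hpre : Set.pi (s : Set ℕ) t = (fun x (i : Fin n) => x (i : ℕ)) ⁻¹' Set.univ.pi t' := by
    ext x
    simp only [Set.mem_pi, Finset.mem_coe, Set.mem_preimage, Set.mem_univ, true_imp_iff, t']
    refine ⟨fun h i => ?_, fun h i hi => by simpa [hi] using h ⟨i, mem_range.1 (hsn hi)⟩⟩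
    split_ifs with hi
    exacts [h i hi, Set.mem_univ _]
  have ht' : MeasurableSet (Set.univ.pi t') :=
    .univ_pi fun i => by dsimp only [t']; split_ifs <;> simp [ht]
  rw [hpre, ← Measure.map_apply (by fun_prop) ht', hQ n, Measure.pi_pi,
    Fin.prod_univ_eq_prod_range (fun i => ν (if i ∈ s then t i else Set.univ)) n]
  simp only [apply_ite ν, measure_univ]
  rw [prod_ite_mem, inter_eq_right.2 hsn]

theorem ae_tendsto_average_infinitePi {E : Type*} [NormedAddCommGroup E] [NormedSpace ℝ E]
    [CompleteSpace E] [MeasurableSpace E] [BorelSpace E] (ν : Measure E) [IsProbabilityMeasure ν]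
    (hν : Integrable id ν) :
    ∀ᵐ x ∂Measure.infinitePi (fun _ : ℕ => ν),
      Tendsto (fun n : ℕ => (n : ℝ)⁻¹ • ∑ i ∈ range n, x i) atTop (𝓝 (∫ y, y ∂ν)) := by
  have hlaw (i : ℕ) : IdentDistrib (fun x : ℕ → E => x i) id (.infinitePi fun _ => ν) ν :=
    ⟨(measurable_pi_apply i).aemeasurable, aemeasurable_id, by
      rw [Measure.map_id, (measurePreserving_eval_infinitePi (fun _ : ℕ => ν) i).map_eq]⟩
  have hindep : iIndepFun (fun i (x : ℕ → E) => x i) (.infinitePi fun _ => ν) :=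
    iIndepFun_infinitePi (X := fun _ => id) fun _ => measurable_id
  have h := strong_law_ae (fun i (x : ℕ → E) => x i) ((hlaw 0).integrable_iff.2 hν)
    (fun i j hij => hindep.indepFun hij) fun i => (hlaw i).trans (hlaw 0).symm
  rwa [(hlaw 0).integral_eq] at h

theorem MeasureTheory.Measure.mutuallySingular_of_ae_tendsto {α ι β : Type*} [MeasurableSpace α]
    [TopologicalSpace β] [T2Space β] {μ ν : Measure α} {l : Filter ι} [l.NeBot]
    {T : ι → α → β} {a b : β} (hab : a ≠ b)
    (hμ : ∀ᵐ x ∂μ, Tendsto (T · x) l (𝓝 a)) (hν : ∀ᵐ x ∂ν, Tendsto (T · x) l (𝓝 b)) :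
    μ ⟂ₘ ν := by
  rw [Measure.mutuallySingular_iff_disjoint_ae, Filter.disjoint_iff]
  exact ⟨_, hμ, _, hν, Set.disjoint_left.2 fun _ ha hb => hab (tendsto_nhds_unique ha hb)⟩

section Prod

variable {E F : Type*} [NormedAddCommGroup E] [MeasurableSpace E] [NormedAddCommGroup F]
  [MeasurableSpace F] {μ : Measure E} {ν : Measure F}

theorem integrable_id_prod [IsFiniteMeasure μ] [IsFiniteMeasure ν] (hμ : Integrable id μ)
    (hν : Integrable id ν) : Integrable id (μ.prod ν) :=
  (hμ.comp_fst ν).prodMk (hν.comp_snd μ)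

theorem integral_id_prod [NormedSpace ℝ E] [CompleteSpace E] [NormedSpace ℝ F] [CompleteSpace F]
    [IsProbabilityMeasure μ] [IsProbabilityMeasure ν]
    (hμ : Integrable id μ) (hν : Integrable id ν) :
    ∫ p, p ∂(μ.prod ν) = (∫ x, x ∂μ, ∫ y, y ∂ν) := by
  change ∫ p, (p.1, p.2) ∂(μ.prod ν) = _
  rw [integral_pair (f := Prod.fst) (g := Prod.snd) (hμ.comp_fst ν) (hν.comp_snd μ),
    integral_fun_fst (fun x => x), integral_fun_snd (fun y => y)]
  simp

end Prod

instance (σ t₁ t₂ x₀ μ : ℝ) : IsProbabilityMeasure (twoTimeLaw σ t₁ t₂ x₀ μ) := by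
  unfold twoTimeLaw
  infer_instance

theorem integrable_id_gaussianReal (m : ℝ) (v : NNReal) : Integrable id (gaussianReal m v) :=
  memLp_one_iff_integrable.1 (memLp_id_gaussianReal 1)

theorem integrable_id_twoTimeLaw (σ t₁ t₂ x₀ μ : ℝ) : Integrable id (twoTimeLaw σ t₁ t₂ x₀ μ) :=
  integrable_id_prod (integrable_id_gaussianReal _ _) (integrable_id_gaussianReal _ _)

theorem integral_id_twoTimeLaw (σ t₁ t₂ x₀ μ : ℝ) :
    ∫ p, p ∂twoTimeLaw σ t₁ t₂ x₀ μ = (x₀ + μ * t₁, x₀ + μ * t₂) := by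
  rw [twoTimeLaw, integral_id_prod (integrable_id_gaussianReal _ _)
    (integrable_id_gaussianReal _ _), integral_id_gaussianReal, integral_id_gaussianReal]

theorem injective_affine_pair {t₁ t₂ : ℝ} (h : t₁ ≠ t₂) :
    Function.Injective fun p : ℝ × ℝ => (p.1 + p.2 * t₁, p.1 + p.2 * t₂) := by
  rintro ⟨x, m⟩ ⟨x', m'⟩ hxm
  simp only [Prod.mk.injEq] at hxm ⊢
  have hm : m = m' := by
    have : (m - m') * (t₁ - t₂) = 0 := by linear_combination hxm.1 - hxm.2
    simpa [sub_eq_zero, h] using this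
  exact ⟨by linear_combination hxm.1 - t₁ * hm, hm⟩

theorem stmt8_general (σ t₁ t₂ : ℝ) (hne : t₁ ≠ t₂)
    (x₀ μ x₀' μ' : ℝ) (hparam : (x₀, μ) ≠ (x₀', μ'))
    (Q Q' : Measure (ℕ → ℝ × ℝ))
    (hQ : IsInfiniteProduct (twoTimeLaw σ t₁ t₂ x₀ μ) Q)
    (hQ' : IsInfiniteProduct (twoTimeLaw σ t₁ t₂ x₀' μ') Q') :
    Q.MutuallySingular Q' := by
  rw [hQ.eq_infinitePi, hQ'.eq_infinitePi]
  refine Measure.mutuallySingular_of_ae_tendsto ?_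
    (ae_tendsto_average_infinitePi _ (integrable_id_twoTimeLaw σ t₁ t₂ x₀ μ))
    (ae_tendsto_average_infinitePi _ (integrable_id_twoTimeLaw σ t₁ t₂ x₀' μ'))
  rw [integral_id_twoTimeLaw, integral_id_twoTimeLaw]
  exact (injective_affine_pair hne).ne hparam

/-- For distinct parameter pairs `(x₀, μ) ≠ (x₀', μ')` the infinite products of the
two-time Gaussian laws on `(ℝ²)^ℕ` are mutually singular. -/
theorem stmt8 (σ t₁ t₂ : ℝ) (hσ : 0 < σ) (ht₁ : 0 < t₁) (ht₂ : 0 < t₂) (hne : t₁ ≠ t₂)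
    (x₀ μ x₀' μ' : ℝ) (hparam : (x₀, μ) ≠ (x₀', μ'))
    (Q Q' : Measure (ℕ → ℝ × ℝ))
    [IsProbabilityMeasure Q] [IsProbabilityMeasure Q']
    (hQ : IsInfiniteProduct (twoTimeLaw σ t₁ t₂ x₀ μ) Q)
    (hQ' : IsInfiniteProduct (twoTimeLaw σ t₁ t₂ x₀' μ') Q') :
    Q.MutuallySingular Q' :=
  stmt8_general σ t₁ t₂ hne x₀ μ x₀' μ' hparam Q Q' hQ hQ'
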